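/- Let ψ : ℝ^d → [0,1] be continuous, equal to 1 on the closed ball of radius 1 and supported in the closed ball of radius 2. Define F : [0,1] × ℝ^n → ℝ^n (with ℝ^n = ℝ^d × ℝ^{n−d}) by F(t,(u,v)) = (u, (H_{tψ(u)}(|v|)/|v|)·v) for v ≠ 0 and F(t,(u,0)) = (u,0), where H is the piecewise-linear homotopy satisfying H_t(s) ≤ s. Then F is continuous, F(0,·) is the identity, F(1,·) maps B(0,1) × B(0,1/2) into ℝ^d × {0}, and F(t,(u,v)) = (u,v) whenever |u| > 2 or |v| > 1. -/

import Mathlib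

/-!
The pinch only rescales the fibre coordinate `v` radially, by the factor `H_{tψ(u)}(|v|)/|v|`.
Away from `v = 0` it is therefore continuous as a composite of continuous maps; at `v = 0` its
norm is `|H_{tψ(u)}(|v|)|`, which tends to `H_{tψ(u)}(0) = 0`. The remaining properties are read
off from `H_0 = id`, `H_1 = 0` on `[0,1/2]`, `H_t = id` on `[1,∞)` and `ψ = 0` outside the
ball of radius `2`.
-/

open Filter Topology

section RadialRescale

variable {E : Type*} [NormedAddCommGroup E] [NormedSpace ℝ E] [DecidableEq E]

theorem ite_div_norm_smul_eq_self {v : E} {r : ℝ} (hr : r = ‖v‖) :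
    (if v = 0 then 0 else (r / ‖v‖) • v) = v := by
  split_ifs with hv
  · exact hv.symm
  · rw [hr, div_self (norm_ne_zero_iff.2 hv), one_smul]

theorem norm_ite_div_norm_smul_le (v : E) (r : ℝ) :
    ‖if v = 0 then 0 else (r / ‖v‖) • v‖ ≤ |r| := by
  split_ifs with hv
  · simp
  · rw [norm_smul, Real.norm_eq_abs, abs_div, abs_norm,
      div_mul_cancel₀ _ (norm_ne_zero_iff.2 hv)]

theorem ContinuousWithinAt.ite_div_norm_smul {X : Type*} [TopologicalSpace X]
    {f : X → ℝ} {v : X → E} {s : Set X} {x : X}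
    (hf : ContinuousWithinAt f s x) (hv : ContinuousWithinAt v s x) (h0 : v x = 0 → f x = 0) :
    ContinuousWithinAt (fun q => if v q = 0 then 0 else (f q / ‖v q‖) • v q) s x := by
  by_cases hvx : v x = 0
  · rw [ContinuousWithinAt, if_pos hvx]
    have hf0 : Tendsto (fun q => |f q|) (𝓝[s] x) (𝓝 0) := by
      simpa [h0 hvx] using hf.abs.tendsto
    exact squeeze_zero_norm (fun q => norm_ite_div_norm_smul_le (v q) (f q)) hf0
  · have hsmooth : ContinuousWithinAt (fun q => (f q / ‖v q‖) • v q) s x :=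
      (hf.div hv.norm (norm_ne_zero_iff.2 hvx)).smul hv
    refine hsmooth.congr_of_eventuallyEq ?_ (if_neg hvx)
    filter_upwards [hv.eventually_ne hvx] with q hq
    exact if_neg hq

end RadialRescale

theorem apply_zero_eq_zero_of_eq_self_near_zero {H : ℝ → ℝ → ℝ} (hH1 : H 1 0 = 0)
    (hHsmall : ∀ t ∈ Set.Icc (0 : ℝ) 1, ∀ s : ℝ, 0 ≤ s → s < (1 - t) / 4 → H t s = s) :
    ∀ t ∈ Set.Icc (0 : ℝ) 1, H t 0 = 0 := by
  intro t ht
  rcases ht.2.eq_or_lt with rfl | ht1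
  · exact hH1
  · exact hHsmall t ht 0 le_rfl (by linarith)

theorem eq_zero_of_lt_norm_of_support_subset_closedBall {E : Type*} [SeminormedAddCommGroup E]
    {ψ : E → ℝ} {r : ℝ} (hψ : Function.support ψ ⊆ Metric.closedBall 0 r) {u : E} (hu : r < ‖u‖) :
    ψ u = 0 :=
  Function.notMem_support.1 fun hu' => (mem_closedBall_zero_iff.1 (hψ hu')).not_gt hu

theorem pinch_properties_general {d m : ℕ}
    (ψ : EuclideanSpace ℝ (Fin d) → ℝ) (hψc : Continuous ψ)
    (hψ01 : ∀ u, ψ u ∈ Set.Icc (0 : ℝ) 1)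
    (hψone : ∀ u ∈ Metric.closedBall (0 : EuclideanSpace ℝ (Fin d)) 1, ψ u = 1)
    (hψsupp : Function.support ψ ⊆ Metric.closedBall (0 : EuclideanSpace ℝ (Fin d)) 2)
    (H : ℝ → ℝ → ℝ)
    (hHc : ContinuousOn (fun p : ℝ × ℝ => H p.1 p.2) (Set.Icc 0 1 ×ˢ Set.Ici 0))
    (hHfix : ∀ t ∈ Set.Icc (0 : ℝ) 1, ∀ s : ℝ, 1 ≤ s → H t s = s)
    (hH0 : ∀ s ∈ Set.Ici (0 : ℝ), H 0 s = s)
    (hH1 : ∀ s ∈ Set.Icc (0 : ℝ) (1 / 2), H 1 s = 0)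
    (hHsmall : ∀ t ∈ Set.Icc (0 : ℝ) 1, ∀ s : ℝ, 0 ≤ s → s < (1 - t) / 4 → H t s = s)
    (F : ℝ → EuclideanSpace ℝ (Fin d) × EuclideanSpace ℝ (Fin m) →
      EuclideanSpace ℝ (Fin d) × EuclideanSpace ℝ (Fin m))
    (hF : ∀ t u v, F t (u, v) =
      (u, if v = 0 then 0 else (H (t * ψ u) ‖v‖ / ‖v‖) • v)) :
    ContinuousOn (fun p : ℝ × (EuclideanSpace ℝ (Fin d) × EuclideanSpace ℝ (Fin m)) =>
        F p.1 p.2) (Set.Icc 0 1 ×ˢ Set.univ) ∧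
    (∀ x, F 0 x = x) ∧
    (∀ u ∈ Metric.ball (0 : EuclideanSpace ℝ (Fin d)) 1,
      ∀ v ∈ Metric.ball (0 : EuclideanSpace ℝ (Fin m)) (1 / 2), (F 1 (u, v)).2 = 0) ∧
    (∀ t ∈ Set.Icc (0 : ℝ) 1, ∀ u v, (2 < ‖u‖ ∨ 1 < ‖v‖) → F t (u, v) = (u, v)) := by
  have hHzero := apply_zero_eq_zero_of_eq_self_near_zero (hH1 0 ⟨le_rfl, by norm_num⟩) hHsmall
  have hmem : ∀ t ∈ Set.Icc (0 : ℝ) 1, ∀ u, t * ψ u ∈ Set.Icc (0 : ℝ) 1 :=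
    fun t ht u => unitInterval.mul_mem ht (hψ01 u)
  refine ⟨?_, ?_, ?_, ?_⟩
  · have hF' : ∀ t x, F t x =
        (x.1, if x.2 = 0 then 0 else (H (t * ψ x.1) ‖x.2‖ / ‖x.2‖) • x.2) :=
      fun t x => hF t x.1 x.2
    simp only [hF']
    refine continuous_snd.fst.continuousOn.prodMk fun p hp => ?_
    have hHcomp : ContinuousWithinAt (fun q : ℝ × (_ × _) => H (q.1 * ψ q.2.1) ‖q.2.2‖)
        (Set.Icc 0 1 ×ˢ Set.univ) p :=
      hHc.comp (f := fun q : ℝ × (_ × _) => (q.1 * ψ q.2.1, ‖q.2.2‖)) (by fun_prop)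
        (fun q hq => ⟨hmem q.1 hq.1 q.2.1, norm_nonneg _⟩) p hp
    refine hHcomp.ite_div_norm_smul (by fun_prop) fun hv => ?_
    rw [hv, norm_zero]
    exact hHzero _ (hmem p.1 hp.1 p.2.1)
  · rintro ⟨u, v⟩
    rw [hF, zero_mul, ite_div_norm_smul_eq_self (hH0 _ (norm_nonneg v))]
  · intro u hu v hv
    rw [hF, one_mul, hψone u (Metric.ball_subset_closedBall hu),
      hH1 ‖v‖ ⟨norm_nonneg v, (mem_ball_zero_iff.1 hv).le⟩]
    simp
  · intro t ht u v huv
    rw [hF, ite_div_norm_smul_eq_self]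
    rcases huv with hu | hv
    · rw [eq_zero_of_lt_norm_of_support_subset_closedBall hψsupp hu, mul_zero,
        hH0 _ (norm_nonneg v)]
    · exact hHfix _ (hmem t ht u) _ hv.le

/-- Properties of the pinch `F(t,(u,v)) = (u, (H_{tψ(u)}(|v|)/|v|)·v)`:
it is continuous, `F 0 = id`, `F 1` maps `B(0,1) × B(0,1/2)` into `ℝ^d × 0`,
and `F t` fixes `(u,v)` whenever `|u| > 2` or `|v| > 1`. -/
theorem pinch_properties {d m : ℕ}
    (ψ : EuclideanSpace ℝ (Fin d) → ℝ) (hψc : Continuous ψ)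
    (hψ01 : ∀ u, ψ u ∈ Set.Icc (0 : ℝ) 1)
    (hψone : ∀ u ∈ Metric.closedBall (0 : EuclideanSpace ℝ (Fin d)) 1, ψ u = 1)
    (hψsupp : Function.support ψ ⊆ Metric.closedBall (0 : EuclideanSpace ℝ (Fin d)) 2)
    (H : ℝ → ℝ → ℝ)
    (hHc : ContinuousOn (fun p : ℝ × ℝ => H p.1 p.2) (Set.Icc 0 1 ×ˢ Set.Ici 0))
    (hHfix : ∀ t ∈ Set.Icc (0 : ℝ) 1, ∀ s : ℝ, 1 ≤ s → H t s = s)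
    (hH0 : ∀ s ∈ Set.Ici (0 : ℝ), H 0 s = s)
    (hH1 : ∀ s ∈ Set.Icc (0 : ℝ) (1 / 2), H 1 s = 0)
    (hHle : ∀ t ∈ Set.Icc (0 : ℝ) 1, ∀ s ∈ Set.Ici (0 : ℝ), H t s ≤ s)
    (hHsmall : ∀ t ∈ Set.Icc (0 : ℝ) 1, ∀ s : ℝ, 0 ≤ s → s < (1 - t) / 4 → H t s = s)
    (F : ℝ → EuclideanSpace ℝ (Fin d) × EuclideanSpace ℝ (Fin m) →
      EuclideanSpace ℝ (Fin d) × EuclideanSpace ℝ (Fin m))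
    (hF : ∀ t u v, F t (u, v) =
      (u, if v = 0 then 0 else (H (t * ψ u) ‖v‖ / ‖v‖) • v)) :
    ContinuousOn (fun p : ℝ × (EuclideanSpace ℝ (Fin d) × EuclideanSpace ℝ (Fin m)) =>
        F p.1 p.2) (Set.Icc 0 1 ×ˢ Set.univ) ∧
    (∀ x, F 0 x = x) ∧
    (∀ u ∈ Metric.ball (0 : EuclideanSpace ℝ (Fin d)) 1,
      ∀ v ∈ Metric.ball (0 : EuclideanSpace ℝ (Fin m)) (1 / 2), (F 1 (u, v)).2 = 0) ∧
    (∀ t ∈ Set.Icc (0 : ℝ) 1, ∀ u v, (2 < ‖u‖ ∨ 1 < ‖v‖) → F t (u, v) = (u, v)) :=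
  pinch_properties_general ψ hψc hψ01 hψone hψsupp H hHc hHfix hH0 hH1 hHsmall F hF
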